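/- Let Z be a nonempty (X_D,M)-safely reachable zone and let 𝔾 be its canonical distance graph. Then: (1) for all x ∈ X_H, 𝔾_{x0} = (≤,-∞) or 𝔾_{0x} ≤ (<,+∞); (2) for all x,y ∈ X, if 𝔾_{xy} = (≤,-∞) then 𝔾_{x0} = (≤,-∞) or 𝔾_{0y} = (≤,-∞). -/

import Mathlib

noncomputable section

open Classical

attribute [local instance] Classical.propDecidable

namespace GTA

/-- A comparison operator: strict `<` or non-strict `≤`. -/
inductive Cmp where
  | lt : Cmp
  | le : Cmp
deriving DecidableEq

/-- `Cmp.holds ◁ a b` means `a ◁ b` in `ℝ̄ = EReal`. -/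
def Cmp.holds : Cmp → EReal → EReal → Prop
  | .lt, a, b => a < b
  | .le, a, b => a ≤ b

/-- Extended addition on `ℝ̄`: `(+∞) + α = α + (+∞) = +∞` for all `α`,
and `(-∞) + β = β + (-∞) = -∞` for `β ≠ +∞`. -/
def eadd (a b : EReal) : EReal := if a = ⊤ ∨ b = ⊤ then ⊤ else a + b

/-- Extended subtraction `β - α := β + (-α)`. -/
def esub (a b : EReal) : EReal := eadd a (-b)

/-- Constants of atomic constraints: elements of `ℤ ∪ {-∞, +∞}`. -/
inductive EConst where
  | ninf : EConst
  | int : ℤ → EConst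
  | pinf : EConst
deriving DecidableEq

def EConst.toEReal : EConst → EReal
  | .ninf => ⊥
  | .int k => ((k : ℝ) : EReal)
  | .pinf => ⊤

variable {C : Type*}

/-- A valuation over the clock set `C` (vertices `Option C`, where `none` is the
special clock `0`), with future clocks `XF` and history clocks the complement of `XF`:
`v 0 = 0`, history clocks take values in `[0, +∞]`, future clocks in `[-∞, 0]`. -/
structure Val (C : Type*) (XF : Set C) where
  toFun : Option C → EReal
  zero' : toFun none = 0
  hist' : ∀ x : C, x ∉ XF → 0 ≤ toFun (some x)
  fut' : ∀ x : C, x ∈ XF → toFun (some x) ≤ 0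

/-- Shift of a clock map by a real delay `δ`: every clock in `X` increases by `δ`,
the special clock `0` keeps value `0`. -/
def shift (u : Option C → EReal) (δ : ℝ) : Option C → EReal
  | none => 0
  | some x => eadd (u (some x)) ((δ : ℝ) : EReal)

/-- An atomic constraint `y - x ◁ c` with `x, y ∈ X ∪ {0}` and `c ∈ ℤ ∪ {-∞,+∞}`. -/
structure Atom (C : Type*) where
  y : Option C
  x : Option C
  cmp : Cmp
  c : EConst

/-- Satisfaction `u ⊨ y - x ◁ c`, i.e. `u(y) - u(x) ◁ c` with extended subtraction. -/
def asat (u : Option C → EReal) (φ : Atom C) : Prop :=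
  φ.cmp.holds (esub (u φ.y) (u φ.x)) φ.c.toEReal

/-- The simulation preorder `≼_G` on clock maps: for every `φ ∈ G` and every real
`δ ≥ 0`, `u + δ ⊨ φ` implies `u' + δ ⊨ φ`. -/
def simLeFun (G : Set (Atom C)) (u u' : Option C → EReal) : Prop :=
  ∀ φ ∈ G, ∀ δ : ℝ, 0 ≤ δ → asat (shift u δ) φ → asat (shift u' δ) φ

/-- `v ≼_G v'` on valuations. -/
def simLe (XF : Set C) (G : Set (Atom C)) (v v' : Val C XF) : Prop :=
  simLeFun G v.toFun v'.toFun

/-- `v' ∈ [R]v`: history clocks in `R` are reset to `0`, future clocks in `R` are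
released (any value in `[-∞,0]`, automatic for valuations), other clocks unchanged. -/
def releaseRel (XF : Set C) (R : Set C) (v v' : Val C XF) : Prop :=
  (∀ x ∈ R, x ∉ XF → v'.toFun (some x) = 0) ∧
  ∀ x : C, x ∉ R → v'.toFun (some x) = v.toFun (some x)

/-- `[R]Z`. -/
def changeSet (XF : Set C) (R : Set C) (Z : Set (Val C XF)) : Set (Val C XF) :=
  { v' | ∃ v ∈ Z, releaseRel XF R v v' }

/-- Time elapse `↑Z = {v + δ : v ∈ Z, δ ≥ 0, (v+δ)(x) ≤ 0 for all future x}`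
(the latter condition is automatic since elements are valuations). -/
def elapseSet (XF : Set C) (Z : Set (Val C XF)) : Set (Val C XF) :=
  { w | ∃ v ∈ Z, ∃ δ : ℝ, 0 ≤ δ ∧ w.toFun = shift v.toFun δ }

/-- Membership of a vertex in a set of clocks (the clock `0` is in no such set). -/
def inR (R : Set C) : Option C → Prop
  | none => False
  | some x => x ∈ R

/-- `pre([R])(G)`. -/
def preChange (R : Set C) (G : Set (Atom C)) : Set (Atom C) :=
  { ψ | ∃ φ ∈ G,
      (¬ inR R φ.x ∧ ¬ inR R φ.y ∧ ψ = φ) ∨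
      (inR R φ.x ∧ ¬ inR R φ.y ∧ ψ = { φ with x := none }) ∨
      (¬ inR R φ.x ∧ inR R φ.y ∧ ψ = { φ with y := none }) }

/-- Instantaneous timed programs: guards (finite conjunctions of atomic constraints),
changes `[R]`, and sequential composition. -/
inductive Prog (C : Type*) where
  | guard : List (Atom C) → Prog C
  | change : Set C → Prog C
  | seq : Prog C → Prog C → Prog C

/-- Semantics `v →prog v'` of programs. -/
def Prog.steps (XF : Set C) : Prog C → Val C XF → Val C XF → Prop
  | .guard g, v, v' => (∀ φ ∈ g, asat v.toFun φ) ∧ v' = v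
  | .change R, v, v' => releaseRel XF R v v'
  | .seq p q, v, v' => ∃ u, Prog.steps XF p v u ∧ Prog.steps XF q u v'

/-- `pre(prog)(G)`. -/
def Prog.pre : Prog C → Set (Atom C) → Set (Atom C)
  | .guard g, G => { φ | φ ∈ g } ∪ G
  | .change R, G => preChange R G
  | .seq p q, G => Prog.pre p (Prog.pre q G)

/-- A weight `(◁, c)` with `c ∈ ℝ̄`. -/
structure Weight where
  cmp : Cmp
  c : EReal

/-- Strict order on weights. -/
def Weight.lt (w w' : Weight) : Prop :=
  w.c < w'.c ∨ (w.c = w'.c ∧ w.cmp = Cmp.lt ∧ w'.cmp = Cmp.le)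

/-- Non-strict order on weights. -/
def Weight.le (w w' : Weight) : Prop := Weight.lt w w' ∨ w = w'

/-- Sum of weights. -/
def Weight.add (w w' : Weight) : Weight :=
  if w = ⟨Cmp.lt, ⊥⟩ ∨ w' = ⟨Cmp.lt, ⊥⟩ then ⟨Cmp.lt, ⊥⟩
  else if w = ⟨Cmp.le, ⊤⟩ ∨ w' = ⟨Cmp.le, ⊤⟩ then ⟨Cmp.le, ⊤⟩
  else if w = ⟨Cmp.le, ⊥⟩ ∨ w' = ⟨Cmp.le, ⊥⟩ then ⟨Cmp.le, ⊥⟩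
  else if w = ⟨Cmp.lt, ⊤⟩ ∨ w' = ⟨Cmp.lt, ⊤⟩ then ⟨Cmp.lt, ⊤⟩
  else ⟨if w.cmp = Cmp.le ∧ w'.cmp = Cmp.le then Cmp.le else Cmp.lt, w.c + w'.c⟩

/-- Minimum of two weights. -/
def Weight.min (w w' : Weight) : Weight := if Weight.le w w' then w else w'

/-- A weight `(◁, c)` is finite if `c ∈ ℝ`. -/
def Weight.Finite (w : Weight) : Prop := w.c ≠ ⊥ ∧ w.c ≠ ⊤

/-- A distance graph: a weight on each ordered pair of distinct vertices of
`X ∪ {0}`; self-loops carry the trivial weight `(≤, +∞)`. -/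
structure DGraph (C : Type*) where
  w : Option C → Option C → Weight
  refl' : ∀ a : Option C, w a a = ⟨Cmp.le, ⊤⟩

namespace DGraph

/-- A well-formed distance graph has no edge of weight `(<, -∞)`. -/
def WF (G : DGraph C) : Prop := ∀ a b, G.w a b ≠ ⟨Cmp.lt, ⊥⟩

/-- The semantics `⟦𝔾⟧` of a distance graph. -/
def sem (G : DGraph C) (XF : Set C) : Set (Val C XF) :=
  { v | ∀ a b : Option C, (G.w a b).cmp.holds (esub (v.toFun b) (v.toFun a)) (G.w a b).c }

/-- Weight of the path `a₀ → a₁ → ⋯ → aₙ` given as the list `[a₀, …, aₙ]`. -/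
def chainWeight (G : DGraph C) : List (Option C) → Weight
  | a :: b :: l => Weight.add (G.w a b) (G.chainWeight (b :: l))
  | _ => ⟨Cmp.le, 0⟩

end DGraph

/-- `l` is a path from `a` to `b`: at least one edge, consecutive vertices distinct. -/
def IsPath (l : List (Option C)) (a b : Option C) : Prop :=
  2 ≤ l.length ∧ l.head? = some a ∧ l.getLast? = some b ∧ l.Chain' (· ≠ ·)

namespace DGraph

/-- `𝔾` has a negative cycle: a cycle of weight strictly less than `(≤, 0)`. -/
def HasNegCycle (G : DGraph C) : Prop :=
  ∃ (a : Option C) (l : List (Option C)),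
    IsPath l a a ∧ Weight.lt (G.chainWeight l) ⟨Cmp.le, 0⟩

/-- `𝔾` is in standard form. -/
def Standard (G : DGraph C) (XF : Set C) : Prop :=
  (∀ x ∈ XF, Weight.le (G.w none (some x)) ⟨Cmp.le, 0⟩) ∧
  (∀ x : C, x ∉ XF → Weight.le (G.w (some x) none) ⟨Cmp.le, 0⟩) ∧
  (∀ x y : C, G.w (some x) (some y) ≠ ⟨Cmp.le, ⊤⟩ →
    G.w (some x) none ≠ ⟨Cmp.le, ⊤⟩ ∧ G.w none (some y) ≠ ⟨Cmp.le, ⊤⟩)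

/-- `𝔾` is normalized: standard form, no negative cycle, and every edge weight is
minimal among the weights of paths between its endpoints. -/
def Normalized (G : DGraph C) (XF : Set C) : Prop :=
  G.Standard XF ∧ ¬ G.HasNegCycle ∧
  ∀ (a b : Option C) (l : List (Option C)), a ≠ b → IsPath l a b →
    Weight.le (G.w a b) (G.chainWeight l)

/-- Weight function of the standardization of `𝔾`. -/
def stdW (G : DGraph C) (XF : Set C) : Option C → Option C → Weight
  | none, some y =>
      if y ∈ XF then Weight.min (G.w none (some y)) ⟨Cmp.le, 0⟩
      else if ∃ a : Option C, a ≠ some y ∧ G.w a (some y) ≠ ⟨Cmp.le, ⊤⟩ then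
        Weight.min (G.w none (some y)) ⟨Cmp.lt, ⊤⟩
      else G.w none (some y)
  | some x, none =>
      if x ∈ XF then
        (if ∃ b : Option C, b ≠ some x ∧ G.w (some x) b ≠ ⟨Cmp.le, ⊤⟩ then
          Weight.min (G.w (some x) none) ⟨Cmp.lt, ⊤⟩
        else G.w (some x) none)
      else Weight.min (G.w (some x) none) ⟨Cmp.le, 0⟩
  | a, b => G.w a b

/-- The standardization of a distance graph. -/
def standardize (G : DGraph C) (XF : Set C) : DGraph C where
  w := G.stdW XF
  refl' := fun a => by
    cases a with
    | none => exact G.refl' none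
    | some x => exact G.refl' (some x)

/-- Intersecting a distance graph with a single atomic constraint `y - x ◁ c`:
the weight of the edge `x → y` is replaced by `min(𝔾_{xy}, (◁, c))`. -/
def addAtom (G : DGraph C) (φ : Atom C) : DGraph C where
  w := fun a b =>
    if a = φ.x ∧ b = φ.y ∧ φ.x ≠ φ.y then
      Weight.min (G.w a b) ⟨φ.cmp, φ.c.toEReal⟩
    else G.w a b
  refl' := fun a => by
    have h : ¬ (a = φ.x ∧ a = φ.y ∧ φ.x ≠ φ.y) := by
      rintro ⟨h1, h2, h3⟩
      exact h3 (h1 ▸ h2 ▸ rfl)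
    show (if a = φ.x ∧ a = φ.y ∧ φ.x ≠ φ.y then
      Weight.min (G.w a a) ⟨φ.cmp, φ.c.toEReal⟩ else G.w a a) = ⟨Cmp.le, ⊤⟩
    rw [if_neg h]
    exact G.refl' a

/-- Intersecting a distance graph with a guard (list of atomic constraints). -/
def guardGraph (G : DGraph C) : List (Atom C) → DGraph C
  | [] => G
  | φ :: g => (G.guardGraph g).addAtom φ

/-- Edgewise minimum of two distance graphs. -/
def minG (G H : DGraph C) : DGraph C where
  w := fun a b => Weight.min (G.w a b) (H.w a b)
  refl' := fun a => by
    show Weight.min (G.w a a) (H.w a a) = _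
    rw [G.refl', H.refl']
    exact ite_self _

end DGraph

/-- The distance graph `𝔾_v^G`. -/
def upGraph (XF : Set C) (G : Set (Atom C)) (v : Val C XF) : DGraph C where
  w := fun a b =>
    match a, b with
    | some x, none =>
        if x ∈ XF then ⟨Cmp.le, -(v.toFun (some x))⟩
        else if ∃ φ ∈ G, φ.y = none ∧ φ.x = some x ∧ φ.c ≠ EConst.ninf ∧ ¬ asat v.toFun φ
          then ⟨Cmp.le, -(v.toFun (some x))⟩
        else ⟨Cmp.le, ⊤⟩
    | none, some y =>
        if y ∈ XF then ⟨Cmp.le, v.toFun (some y)⟩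
        else if ∃ φ ∈ G, φ.y = some y ∧ φ.x = none ∧ φ.c ≠ EConst.pinf ∧ asat v.toFun φ
          then ⟨Cmp.le, v.toFun (some y)⟩
        else ⟨Cmp.le, ⊤⟩
    | _, _ => ⟨Cmp.le, ⊤⟩
  refl' := fun a => by cases a <;> rfl

/-- The guard `g_v^G`: all constraints of `G` satisfied by `v`. -/
def upGuard (G : Set (Atom C)) (u : Option C → EReal) : Set (Atom C) :=
  { φ ∈ G | asat u φ }

/-- An atomic constraint is `M`-bounded. -/
def MBounded (M : ℕ) (φ : Atom C) : Prop :=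
  (∃ k : ℤ, φ.c = EConst.int k ∧ -(M : ℤ) ≤ k ∧ k ≤ (M : ℤ)) ∨
  (φ.cmp = Cmp.le ∧ φ.c = EConst.ninf) ∨ φ.c = EConst.pinf

/-- An atomic constraint is `M`-bounded integral (constant in `{-∞,+∞} ∪ [-M, M] ∩ ℤ`). -/
def MBoundedIntegral (M : ℕ) (φ : Atom C) : Prop :=
  (∃ k : ℤ, φ.c = EConst.int k ∧ -(M : ℤ) ≤ k ∧ k ≤ (M : ℤ)) ∨
  φ.c = EConst.ninf ∨ φ.c = EConst.pinf

/-- An atomic constraint is `X_D`-safe: if both endpoints are future clocks,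
they are in `X_D`. -/
def XDSafe (XF XD : Set C) (φ : Atom C) : Prop :=
  ∀ x y : C, φ.x = some x → φ.y = some y → x ∈ XF → y ∈ XF → x ∈ XD ∧ y ∈ XD

/-- Vertices in `X_F ∪ {0}`. -/
def futV (XF : Set C) : Option C → Prop
  | none => True
  | some x => x ∈ XF

/-- Vertices in `X_H ∪ {0}`. -/
def histV (XF : Set C) : Option C → Prop
  | none => True
  | some x => x ∉ XF

/-- The equivalence `v₁ ≃ v₂`: agreement on history clocks and on all
`(X_D, M)`-safe constraints over `X_F ∪ {0}`. -/
def simeqV (XF XD : Set C) (M : ℕ) (v₁ v₂ : Val C XF) : Prop :=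
  (∀ x : C, x ∉ XF → v₁.toFun (some x) = v₂.toFun (some x)) ∧
  ∀ φ : Atom C, XDSafe XF XD φ → MBounded M φ → futV XF φ.x → futV XF φ.y →
    (asat v₁.toFun φ ↔ asat v₂.toFun φ)

/-- `(X_D, M)`-safely reachable zones: obtained from the initial zone
`↑(𝕍 ∧ g₀)` (`g₀` fixing each history clock to `0` or `+∞`) by the
`(X_D, M)`-safe zone operations. -/
inductive SafeReach (XF XD : Set C) (M : ℕ) : Set (Val C XF) → Prop where
  | init (f : C → EReal) (hf : ∀ x : C, x ∉ XF → f x = 0 ∨ f x = ⊤) :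
      SafeReach XF XD M (elapseSet XF { v | ∀ x : C, x ∉ XF → v.toFun (some x) = f x })
  | guard {Z : Set (Val C XF)} (g : Set (Atom C))
      (hg : ∀ φ ∈ g, XDSafe XF XD φ ∧ MBounded M φ)
      (h : SafeReach XF XD M Z) :
      SafeReach XF XD M { v ∈ Z | ∀ φ ∈ g, asat v.toFun φ }
  | changeSimple {Z : Set (Val C XF)} (x : C) (hx : x ∉ XD) (h : SafeReach XF XD M Z) :
      SafeReach XF XD M (changeSet XF {x} Z)
  | changeD {Z : Set (Val C XF)} (x : C) (hx : x ∈ XD) (c : EReal) (hc : c = 0 ∨ c = ⊥)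
      (h : SafeReach XF XD M Z) :
      SafeReach XF XD M (changeSet XF {x} { v ∈ Z | v.toFun (some x) = c })
  | elapse {Z : Set (Val C XF)} (h : SafeReach XF XD M Z) :
      SafeReach XF XD M (elapseSet XF Z)

/-- `α ∼_K β` on `ℝ̄`. -/
def eqvK (K : ℕ) (α β : EReal) : Prop :=
  ∀ (cmp : Cmp) (c : EReal),
    (c = ⊥ ∨ c = ⊤ ∨ ∃ k : ℤ, c = ((k : ℝ) : EReal) ∧ |k| ≤ (K : ℤ)) →
    (cmp.holds α c ↔ cmp.holds β c)

/-- The equivalence `v ∼ⁿ_M v'` on valuations. -/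
def simVn (XF : Set C) (M n : ℕ) (v v' : Val C XF) : Prop :=
  (∀ x : C, eqvK (n * M) (v.toFun (some x)) (v'.toFun (some x))) ∧
  ∀ x y : C, eqvK ((n + 1) * M)
    (esub (v.toFun (some x)) (v.toFun (some y)))
    (esub (v'.toFun (some x)) (v'.toFun (some y)))

/-- The `(†)` conditions for a distance graph with bound `B` (usually `B = nM`). -/
def Dagger (XF : Set C) (B : ℕ) (G : DGraph C) : Prop :=
  (∀ x ∈ XF, (∃ b : Option C, histV XF b ∧ (G.w (some x) b).Finite) →
     Weight.le ⟨Cmp.le, 0⟩ (G.w (some x) none) ∧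
     Weight.le (G.w (some x) none) ⟨Cmp.le, ((B : ℝ) : EReal)⟩) ∧
  (∀ x ∈ XF, (G.w none (some x)).Finite →
     Weight.le ⟨Cmp.lt, ((-(B : ℝ) : ℝ) : EReal)⟩ (G.w none (some x)) ∧
     Weight.le (G.w none (some x)) ⟨Cmp.le, 0⟩) ∧
  (∀ x : C, x ∉ XF → ∀ y ∈ XF, (G.w none (some y)).Finite →
     Weight.le (Weight.add (G.w (some x) none) ⟨Cmp.lt, ((-(B : ℝ) : ℝ) : EReal)⟩)
       (G.w (some x) (some y))) ∧
  (∀ x ∈ XF, ∀ y ∈ XF, (G.w (some x) (some y)).Finite →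
     Weight.le ⟨Cmp.lt, ((-(B : ℝ) : ℝ) : EReal)⟩ (G.w (some x) (some y)) ∧
     Weight.le (G.w (some x) (some y)) ⟨Cmp.le, ((B : ℝ) : EReal)⟩)

end GTA

/-!
In a safely reachable zone every history clock `x` is either `+∞` in all valuations or in none:
the initial zone fixes it to `0` or `+∞`, resetting it gives `0`, and the other safe operations
never move it between finite and infinite values. A normalized graph records both situations.
If `𝔾_{x0} ≠ (≤,-∞)`, a valuation with `x = +∞` can be turned into one with `x` finite:
send to `-∞` the future clocks `y` with `𝔾_{xy} = (≤,-∞)` (by the triangle inequality and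
standard form all their outgoing edges are trivial), then lower `x` to a large real. If
`𝔾_{0x} = (≤,+∞)`, all edges into `x` are trivial and `x` can be raised to `+∞`. Reversing the
graph and negating valuations swaps the roles of history and future clocks and of `±∞`, which
gives the dual statement for `𝔾_{0y}`.
-/

namespace GTA

section

variable {C : Type*} {XF : Set C}

theorem eadd_comm (a b : EReal) : eadd a b = eadd b a := by
  simp only [eadd, or_comm, add_comm]

@[simp] theorem esub_top_left (b : EReal) : esub ⊤ b = ⊤ := by simp [esub, eadd]

@[simp] theorem esub_bot_right (a : EReal) : esub a ⊥ = ⊤ := by simp [esub, eadd]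

theorem esub_bot_left {b : EReal} (h : b ≠ ⊥) : esub ⊥ b = ⊥ := by
  simp [esub, eadd, h]

theorem esub_coe (r s : ℝ) : esub r s = ((r - s : ℝ) : EReal) := by
  simp [esub, eadd, sub_eq_add_neg]

theorem esub_neg_neg (a b : EReal) : esub (-a) (-b) = esub b a := by
  simp only [esub, neg_neg, eadd_comm]

theorem eadd_coe_eq_top_iff {a : EReal} (δ : ℝ) : eadd a δ = ⊤ ↔ a = ⊤ := by
  induction a <;> simp [eadd, ← EReal.coe_add]

theorem Cmp.holds_of_lt (cmp : Cmp) {a b : EReal} (h : a < b) : cmp.holds a b := by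
  cases cmp
  exacts [h, h.le]

namespace Weight

theorem eq_top_of_holds_top {w : Weight} (h : w.cmp.holds ⊤ w.c) : w = ⟨Cmp.le, ⊤⟩ := by
  rcases w with ⟨_ | _, c⟩
  · exact absurd h not_top_lt
  · simpa [Cmp.holds] using h

theorem holds_of_eq_top {w : Weight} (h : w = ⟨Cmp.le, ⊤⟩) (a : EReal) : w.cmp.holds a w.c := by
  subst h; exact le_top

theorem holds_bot {w : Weight} (h : w ≠ ⟨Cmp.lt, ⊥⟩) : w.cmp.holds ⊥ w.c := by
  rcases w with ⟨_ | _, c⟩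
  · exact Ne.bot_lt fun hc => h (by simp_all)
  · exact bot_le

theorem add_comm (w w' : Weight) : add w w' = add w' w := by
  unfold add
  simp only [or_comm, and_comm, _root_.add_comm]

theorem add_zero (w : Weight) : add w ⟨Cmp.le, 0⟩ = w := by
  rcases w with ⟨_ | _, c⟩ <;> induction c <;> simp [add]

theorem eq_of_le_bot {w : Weight} (h : le w ⟨Cmp.le, ⊥⟩) :
    w = ⟨Cmp.le, ⊥⟩ ∨ w = ⟨Cmp.lt, ⊥⟩ := by
  rcases w with ⟨_ | _, c⟩ <;> rcases h with (h | h) | h <;> simp_all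

theorem not_top_le_zero : ¬ le ⟨Cmp.le, ⊤⟩ ⟨Cmp.le, 0⟩ := by
  simp [le, lt]

theorem le_lt_top {w : Weight} (h : w ≠ ⟨Cmp.le, ⊤⟩) : le w ⟨Cmp.lt, ⊤⟩ := by
  rcases w with ⟨_ | _, c⟩ <;> induction c <;> simp_all [le, lt]

theorem bot_add {w : Weight} (h₁ : w ≠ ⟨Cmp.lt, ⊥⟩) (h₂ : w ≠ ⟨Cmp.le, ⊤⟩) :
    add ⟨Cmp.le, ⊥⟩ w = ⟨Cmp.le, ⊥⟩ := by
  simp [add, h₁, h₂]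

end Weight

namespace DGraph

def reverse (G : DGraph C) : DGraph C where
  w a b := G.w b a
  refl' a := G.refl' a

def Triangle (G : DGraph C) : Prop :=
  ∀ a b c, a ≠ b → b ≠ c → a ≠ c → Weight.le (G.w a c) (Weight.add (G.w a b) (G.w b c))

theorem Normalized.triangle {G : DGraph C} (hG : G.Normalized XF) : G.Triangle := by
  intro a b c hab hbc hac
  have hpath : IsPath [a, b, c] a c := ⟨by simp, rfl, by simp, 
    by show List.IsChain _ _; simp [hab, hbc]⟩
  simpa [chainWeight, Weight.add_zero] using hG.2.2 a c _ hac hpath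

theorem Triangle.reverse {G : DGraph C} (hG : G.Triangle) : G.reverse.Triangle :=
  fun a b c hab hbc hac => by
    simpa [DGraph.reverse, Weight.add_comm] using hG c b a hbc.symm hab.symm hac.symm

theorem WF.reverse {G : DGraph C} (hG : G.WF) : G.reverse.WF := fun a b => hG b a

theorem Triangle.eq_bot {G : DGraph C} (hG : G.Triangle) (hWF : G.WF) {a b c : Option C}
    (hab : a ≠ b) (hbc : b ≠ c) (hac : a ≠ c)
    (h₁ : G.w a b = ⟨Cmp.le, ⊥⟩) (h₂ : G.w b c ≠ ⟨Cmp.le, ⊤⟩) : G.w a c = ⟨Cmp.le, ⊥⟩ := by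
  have := hG a b c hab hbc hac
  rw [h₁, Weight.bot_add (hWF b c) h₂] at this
  exact (Weight.eq_of_le_bot this).resolve_right (hWF a c)

theorem Standard.out_eq_top {G : DGraph C} (hG : G.Standard XF) {x : C}
    (hx : G.w (some x) none = ⟨Cmp.le, ⊤⟩) (b : Option C) : G.w (some x) b = ⟨Cmp.le, ⊤⟩ := by
  cases b with
  | none => exact hx
  | some y => by_contra h; exact (hG.2.2 x y h).1 hx

theorem Standard.in_eq_top {G : DGraph C} (hG : G.Standard XF) {y : C}
    (hy : G.w none (some y) = ⟨Cmp.le, ⊤⟩) (a : Option C) : G.w a (some y) = ⟨Cmp.le, ⊤⟩ := by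
  cases a with
  | none => exact hy
  | some x => by_contra h; exact (hG.2.2 x y h).2 hy

theorem Standard.reverse {G : DGraph C} {YF : Set C} (hG : G.Standard XF)
    (hYF : ∀ x, x ∈ YF ↔ x ∉ XF) : G.reverse.Standard YF := by
  refine ⟨fun x hx => hG.2.1 x ((hYF x).1 hx), fun x hx => hG.1 x ?_,
    fun x y h => (hG.2.2 y x h).symm⟩
  simpa [hYF] using hx

end DGraph

def Val.neg {YF : Set C} (hYF : ∀ x, x ∈ YF ↔ x ∉ XF) (v : Val C XF) : Val C YF where
  toFun a := -v.toFun a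
  zero' := by simp [v.zero']
  hist' x hx := EReal.neg_nonneg.mpr (v.fut' x (not_not.mp (mt (hYF x).2 hx)))
  fut' x hx := by simpa [EReal.neg_le] using v.hist' x ((hYF x).1 hx)

namespace DGraph

variable {G : DGraph C} {v : Val C XF}

theorem neg_mem_sem_reverse {YF : Set C} (hYF : ∀ x, x ∈ YF ↔ x ∉ XF) (hv : v ∈ G.sem XF) :
    v.neg hYF ∈ G.reverse.sem YF :=
  fun a b => by simpa [Val.neg, DGraph.reverse, esub_neg_neg] using hv b a

theorem w_eq_top_of_mem_sem_of_eq_top (hv : v ∈ G.sem XF) {b : Option C}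
    (hb : v.toFun b = ⊤) (a : Option C) : G.w a b = ⟨Cmp.le, ⊤⟩ :=
  Weight.eq_top_of_holds_top (by simpa [hb] using hv a b)

theorem w_eq_top_of_mem_sem_of_eq_bot (hv : v ∈ G.sem XF) {a : Option C}
    (ha : v.toFun a = ⊥) (b : Option C) : G.w a b = ⟨Cmp.le, ⊤⟩ :=
  Weight.eq_top_of_holds_top (by simpa [ha] using hv a b)

theorem eq_bot_or_eq_top_of_mem_sem (hv : v ∈ G.sem XF) {a b : Option C}
    (h : G.w a b = ⟨Cmp.le, ⊥⟩) : v.toFun b = ⊥ ∨ v.toFun a = ⊤ := by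
  have hab : esub (v.toFun b) (v.toFun a) ≤ ⊥ := by simpa [h, Cmp.holds] using hv a b
  generalize v.toFun a = p, v.toFun b = q at hab ⊢
  induction q <;> induction p <;> simp_all [esub_coe, -EReal.coe_sub]

theorem exists_mem_sem_eq_bot_on (hWF : G.WF) (hv : v ∈ G.sem XF) {S : Set C} (hSF : S ⊆ XF)
    (hS : ∀ x ∈ S, ∀ b, G.w (some x) b = ⟨Cmp.le, ⊤⟩) :
    ∃ v' ∈ G.sem XF, (∀ x ∈ S, v'.toFun (some x) = ⊥) ∧
      ∀ x ∉ S, v'.toFun (some x) = v.toFun (some x) := by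
  let v' : Val C XF :=
    { toFun := fun a => if inR S a then ⊥ else v.toFun a
      zero' := by simp [inR, v.zero']
      hist' := fun x hx => by simpa [inR, mt (@hSF x) hx] using v.hist' x hx
      fut' := fun x hx => by
        by_cases hxS : x ∈ S <;> simp [inR, hxS, v.fut' x hx] }
  have hS' : ∀ a, inR S a → ∀ b, G.w a b = ⟨Cmp.le, ⊤⟩ := by
    rintro (_ | x) hx b
    exacts [hx.elim, hS x hx b]
  refine ⟨v', fun a b => ?_, fun x hx => if_pos hx, fun x hx => if_neg hx⟩
  by_cases ha : inR S a
  · exact Weight.holds_of_eq_top (hS' a ha b) _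
  by_cases hb : inR S b
  · by_cases hva : v.toFun a = ⊥
    · exact Weight.holds_of_eq_top (w_eq_top_of_mem_sem_of_eq_bot hv hva b) _
    · simpa [v', ha, hb, esub_bot_left hva] using Weight.holds_bot (hWF a b)
  · simpa [v', ha, hb] using hv a b

theorem exists_mem_sem_ne_top_of_eq_top [Finite C] (hWF : G.WF) (hv : v ∈ G.sem XF) {x : C}
    (hx : x ∉ XF) (hvx : v.toFun (some x) = ⊤)
    (hbot : ∀ b, G.w (some x) b = ⟨Cmp.le, ⊥⟩ → v.toFun b = ⊥) :
    ∃ v' ∈ G.sem XF, v'.toFun (some x) ≠ ⊤ := by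
  obtain ⟨N, hN0, hN⟩ : ∃ N : ℝ, 0 ≤ N ∧
      ∀ b, (v.toFun b).toReal - (G.w (some x) b).c.toReal < N := by
    obtain ⟨N, hN⟩ := Finite.exists_le fun b => (v.toFun b).toReal - (G.w (some x) b).c.toReal
    exact ⟨max 0 (N + 1), le_max_left _ _,
      fun b => (hN b).trans_lt ((lt_add_one N).trans_le (le_max_right _ _))⟩
  -- all edges into `x` are trivial, so lowering `x` to `N` only affects the edges out of `x`
  have hout : ∀ b ≠ some x,
      (G.w (some x) b).cmp.holds (esub (v.toFun b) N) (G.w (some x) b).c := by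
    intro b hbx
    induction hvb : v.toFun b with
    | bot => rw [esub_bot_left (EReal.coe_ne_bot N)]; exact Weight.holds_bot (hWF _ _)
    | top => exact Weight.holds_of_eq_top (w_eq_top_of_mem_sem_of_eq_top hv hvb _) _
    | coe r =>
      have hrN := hN b
      rw [esub_coe]
      rcases hw : G.w (some x) b with ⟨cmp, c⟩
      induction c with
      | bot =>
        cases cmp
        · exact absurd hw (hWF _ _)
        · simpa [hvb] using hbot b hw
      | top => exact cmp.holds_of_lt (EReal.coe_lt_top _)
      | coe s =>
        simp only [hvb, hw, EReal.toReal_coe] at hrN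
        exact cmp.holds_of_lt (EReal.coe_lt_coe_iff.mpr (by linarith))
  let v' : Val C XF :=
    { toFun := Function.update v.toFun (some x) N
      zero' := by simp [v.zero']
      hist' := fun y hy => by
        by_cases hyx : y = x
        · subst hyx; simpa using hN0
        · simpa [hyx] using v.hist' y hy
      fut' := fun y hy => by
        simpa [show y ≠ x by rintro rfl; exact hx hy] using v.fut' y hy }
  refine ⟨v', fun a b => ?_, by simp [v']⟩
  by_cases hb : b = some x
  · exact Weight.holds_of_eq_top (hb ▸ w_eq_top_of_mem_sem_of_eq_top hv hvx a) _
  by_cases ha : a = some x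
  · subst ha; simpa [v', hb] using hout b hb
  · simpa [v', ha, hb] using hv a b

theorem exists_mem_sem_ne_top [Finite C] (hWF : G.WF) (hstd : G.Standard XF)
    (htri : G.Triangle) {x : C} (hx : x ∉ XF) (hx0 : G.w (some x) none ≠ ⟨Cmp.le, ⊥⟩)
    (hv : v ∈ G.sem XF) : ∃ v' ∈ G.sem XF, v'.toFun (some x) ≠ ⊤ := by
  by_cases hvx : v.toFun (some x) = ⊤
  swap
  · exact ⟨v, hv, hvx⟩
  -- the clocks that `𝔾_{x·} = (≤,-∞)` forces to `-∞` once `x` is finite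
  let S : Set C := {e | G.w (some x) (some e) = ⟨Cmp.le, ⊥⟩}
  have hxS : x ∉ S := by simp [S, G.refl']
  have hS : ∀ e ∈ S, ∀ b, G.w (some e) b = ⟨Cmp.le, ⊤⟩ := by
    intro e he
    refine hstd.out_eq_top (by_contra fun h => hx0 (htri.eq_bot hWF ?_ (by simp) (by simp) he h))
    rintro ⟨⟩; exact hxS he
  have hSF : S ⊆ XF := fun e he => by_contra fun h =>
    Weight.not_top_le_zero (hS e he none ▸ hstd.2.1 e h)
  obtain ⟨v₁, hv₁, hv₁S, hv₁x⟩ := exists_mem_sem_eq_bot_on hWF hv hSF hS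
  refine exists_mem_sem_ne_top_of_eq_top hWF hv₁ hx ((hv₁x x hxS).trans hvx) ?_
  rintro (_ | e) he
  exacts [absurd he hx0, hv₁S e he]

theorem exists_mem_sem_ne_bot [Finite C] (hWF : G.WF) (hstd : G.Standard XF)
    (htri : G.Triangle) {y : C} (hy : y ∈ XF) (h0y : G.w none (some y) ≠ ⟨Cmp.le, ⊥⟩)
    (hv : v ∈ G.sem XF) : ∃ v' ∈ G.sem XF, v'.toFun (some y) ≠ ⊥ := by
  have hYF : ∀ x, x ∈ XFᶜ ↔ x ∉ XF := fun _ => Iff.rfl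
  obtain ⟨v', hv', hv'y⟩ := exists_mem_sem_ne_top hWF.reverse (hstd.reverse hYF) htri.reverse
    (not_not.mpr hy) h0y (neg_mem_sem_reverse hYF hv)
  exact ⟨v'.neg fun _ => not_not.symm, neg_mem_sem_reverse _ hv', by simpa [Val.neg] using hv'y⟩

theorem exists_mem_sem_eq_top (hWF : G.WF) (hstd : G.Standard XF) {x : C} (hx : x ∉ XF)
    (h0x : G.w none (some x) = ⟨Cmp.le, ⊤⟩) (hv : v ∈ G.sem XF) :
    ∃ v' ∈ G.sem XF, v'.toFun (some x) = ⊤ := by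
  have hYF : ∀ x, x ∈ XFᶜ ↔ x ∉ XF := fun _ => Iff.rfl
  obtain ⟨v', hv', hv'x, -⟩ := exists_mem_sem_eq_bot_on (S := {x}) hWF.reverse
    (neg_mem_sem_reverse hYF hv) (Set.singleton_subset_iff.mpr hx)
    (by rintro e rfl b; exact hstd.in_eq_top h0x b)
  exact ⟨v'.neg fun _ => not_not.symm, neg_mem_sem_reverse _ hv', by simp [Val.neg, hv'x x rfl]⟩

theorem Normalized.w_eq_bot_of_forall_eq_top [Finite C] (hWF : G.WF) (hG : G.Normalized XF)
    (hne : (G.sem XF).Nonempty) {x : C} (hall : ∀ v ∈ G.sem XF, v.toFun (some x) = ⊤) :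
    G.w (some x) none = ⟨Cmp.le, ⊥⟩ := by
  obtain ⟨v, hv⟩ := hne
  have hx : x ∉ XF := fun hx => by simpa [hall v hv] using v.fut' x hx
  by_contra h
  obtain ⟨v', hv', hv'x⟩ := exists_mem_sem_ne_top hWF hG.1 hG.triangle hx h hv
  exact hv'x (hall v' hv')

theorem Normalized.w_eq_bot_of_forall_eq_bot [Finite C] (hWF : G.WF) (hG : G.Normalized XF)
    (hne : (G.sem XF).Nonempty) {y : C} (hall : ∀ v ∈ G.sem XF, v.toFun (some y) = ⊥) :
    G.w none (some y) = ⟨Cmp.le, ⊥⟩ := by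
  obtain ⟨v, hv⟩ := hne
  have hy : y ∈ XF := by_contra fun hy => by simpa [hall v hv] using v.hist' y hy
  by_contra h
  obtain ⟨v', hv', hv'y⟩ := exists_mem_sem_ne_bot hWF hG.1 hG.triangle hy h hv
  exact hv'y (hall v' hv')

theorem Standard.w_ne_top_of_forall_ne_top (hWF : G.WF) (hG : G.Standard XF)
    (hne : (G.sem XF).Nonempty) {x : C} (hx : x ∉ XF)
    (hall : ∀ v ∈ G.sem XF, v.toFun (some x) ≠ ⊤) : G.w none (some x) ≠ ⟨Cmp.le, ⊤⟩ := by
  obtain ⟨v, hv⟩ := hne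
  intro h
  obtain ⟨v', hv', hv'x⟩ := exists_mem_sem_eq_top hWF hG hx h hv
  exact hall v' hv' hv'x

end DGraph

theorem exists_eq_top_iff_of_mem_elapseSet {Z : Set (Val C XF)} {w : Val C XF}
    (hw : w ∈ elapseSet XF Z) (a : Option C) :
    ∃ v ∈ Z, (w.toFun a = ⊤ ↔ v.toFun a = ⊤) := by
  obtain ⟨v, hv, δ, -, hwv⟩ := hw
  refine ⟨v, hv, ?_⟩
  cases a with
  | none => simp [w.zero', v.zero']
  | some x => rw [hwv]; exact eadd_coe_eq_top_iff δ

theorem exists_eq_of_mem_changeSet {R : Set C} {Z : Set (Val C XF)} {w : Val C XF}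
    (hw : w ∈ changeSet XF R Z) {x : C} (hx : x ∉ R) :
    ∃ v ∈ Z, w.toFun (some x) = v.toFun (some x) := by
  obtain ⟨v, hv, -, hwv⟩ := hw
  exact ⟨v, hv, hwv x hx⟩

theorem forall_eq_top_or_forall_ne_top_of_forall_exists {Z Z' : Set (Val C XF)} {a : Option C}
    (hZ : (∀ v ∈ Z, v.toFun a = ⊤) ∨ ∀ v ∈ Z, v.toFun a ≠ ⊤)
    (h : ∀ w ∈ Z', ∃ v ∈ Z, (w.toFun a = ⊤ ↔ v.toFun a = ⊤)) :
    (∀ w ∈ Z', w.toFun a = ⊤) ∨ ∀ w ∈ Z', w.toFun a ≠ ⊤ := by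
  rcases hZ with hZ | hZ
  · left
    intro w hw
    obtain ⟨v, hv, hwv⟩ := h w hw
    exact hwv.2 (hZ v hv)
  · right
    intro w hw
    obtain ⟨v, hv, hwv⟩ := h w hw
    exact mt hwv.1 (hZ v hv)

theorem SafeReach.forall_eq_top_or_forall_ne_top {XD : Set C} {M : ℕ} (hXD : XD ⊆ XF)
    {Z : Set (Val C XF)} (hZ : SafeReach XF XD M Z) {x : C} (hx : x ∉ XF) :
    (∀ v ∈ Z, v.toFun (some x) = ⊤) ∨ ∀ v ∈ Z, v.toFun (some x) ≠ ⊤ := by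
  induction hZ with
  | init f =>
    refine forall_eq_top_or_forall_ne_top_of_forall_exists ?_
      fun w hw => exists_eq_top_iff_of_mem_elapseSet hw _
    by_cases hf : f x = ⊤
    · exact Or.inl fun v hv => (hv x hx).trans hf
    · exact Or.inr fun v hv => (hv x hx).trans_ne hf
  | guard g _ _ ih =>
    exact forall_eq_top_or_forall_ne_top_of_forall_exists ih fun w hw => ⟨w, hw.1, Iff.rfl⟩
  | changeSimple x' _ _ ih =>
    by_cases hxx' : x = x'
    · subst hxx'
      right
      rintro w ⟨v, -, hw, -⟩
      simp [hw x rfl hx]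
    · refine forall_eq_top_or_forall_ne_top_of_forall_exists ih fun w hw => ?_
      obtain ⟨v, hv, hwv⟩ := exists_eq_of_mem_changeSet hw hxx'
      exact ⟨v, hv, by rw [hwv]⟩
  | changeD x' hx' _ _ _ ih =>
    have hxx' : x ∉ ({x'} : Set C) := by rintro rfl; exact hx (hXD hx')
    refine forall_eq_top_or_forall_ne_top_of_forall_exists ih fun w hw => ?_
    obtain ⟨v, hv, hwv⟩ := exists_eq_of_mem_changeSet hw hxx'
    exact ⟨v, hv.1, by rw [hwv]⟩
  | elapse _ ih =>
    exact forall_eq_top_or_forall_ne_top_of_forall_exists ih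
      fun w hw => exists_eq_top_iff_of_mem_elapseSet hw _

end

/-- properties of the canonical distance graph of a nonempty safely
reachable zone. -/
theorem reachable_properties {C : Type*} [Finite C] (XF XD : Set C) (hXD : XD ⊆ XF)
    (M : ℕ) (Z : Set (Val C XF)) (hZ : SafeReach XF XD M Z) (hne : Z.Nonempty)
    (G : DGraph C) (hWF : G.WF) (hnorm : G.Normalized XF) (hsem : G.sem XF = Z) :
    (∀ x : C, x ∉ XF →
      G.w (some x) none = ⟨Cmp.le, ⊥⟩ ∨ Weight.le (G.w none (some x)) ⟨Cmp.lt, ⊤⟩) ∧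
    (∀ x y : C, G.w (some x) (some y) = ⟨Cmp.le, ⊥⟩ →
      G.w (some x) none = ⟨Cmp.le, ⊥⟩ ∨ G.w none (some y) = ⟨Cmp.le, ⊥⟩) := by
  subst hsem
  have hdich := fun x (hx : x ∉ XF) => hZ.forall_eq_top_or_forall_ne_top hXD hx
  refine ⟨fun x hx => (hdich x hx).imp (hnorm.w_eq_bot_of_forall_eq_top hWF hne)
    fun h => Weight.le_lt_top (hnorm.1.w_ne_top_of_forall_ne_top hWF hne hx h), fun x y hxy => ?_⟩
  have hedge := fun v (hv : v ∈ G.sem XF) => DGraph.eq_bot_or_eq_top_of_mem_sem hv hxy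
  -- a `(≤,-∞)` edge `x → y` forces `y = -∞` or `x = +∞`, and `x = +∞` is all-or-nothing
  have hcases :
      (∀ v ∈ G.sem XF, v.toFun (some x) = ⊤) ∨ ∀ v ∈ G.sem XF, v.toFun (some y) = ⊥ := by
    by_cases hx : x ∈ XF
    · exact Or.inr fun v hv => (hedge v hv).resolve_right fun h => by
        simpa [h] using v.fut' x hx
    · exact (hdich x hx).imp_right fun h v hv => (hedge v hv).resolve_right (h v hv)
  exact hcases.imp (hnorm.w_eq_bot_of_forall_eq_top hWF hne) (hnorm.w_eq_bot_of_forall_eq_bot hWF hne)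

end GTA
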